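/- Define f(m,r,s₁,s₂) = ∑_{t=0}^{m+r-1} (-1)^t · (m+r-t) · C(r-s₁, t-s₁-s₂). If m, s₁, s₂ ≥ 0 are integers with s₁ + s₂ ≤ m, then f(m, m, s₁, s₂) = 0 unless (s₁,s₂) ∈ {(m,0), (m-1,1), (m-1,0)}; moreover f(m,m,m,0) = (-1)^m · m, f(m,m,m-1,1) = (-1)^m, and f(m,m,m-1,0) = (-1)^{m+1}. -/

import Mathlib

def C (n k : ℤ) : ℤ := if 0 ≤ k ∧ k ≤ n then (n.toNat.choose k.toNat : ℤ) else 0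

def f (m r s₁ s₂ : ℕ) : ℤ :=
  ∑ t ∈ Finset.range (m + r), (-1 : ℤ) ^ t * ((m : ℤ) + r - t) * C ((r : ℤ) - s₁) ((t : ℤ) - s₁ - s₂)

/-!
After the substitution `k = t - s₁ - s₂`, `f m r s₁ s₂` becomes
`(-1)^(s₁+s₂) ∑ₖ (-1)^k (m + r - s₁ - s₂ - k) C(r - s₁, k)`. The alternating sums
`∑ (-1)^k C(n, k)` and `∑ (-1)^k k C(n, k)` vanish unless `n = 0`, resp. `n = 1`, so only
`r - s₁ ∈ {0, 1}` contributes.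
-/

open Finset

theorem Int.alternating_sum_range_mul_choose (n : ℕ) :
    ∑ k ∈ Finset.range (n + 1), ((-1) ^ k * k * n.choose k : ℤ) = if n = 1 then -1 else 0 := by
  cases n with
  | zero => simp
  | succ n =>
    have absorb : ∀ k ∈ Finset.range (n + 1),
        ((-1) ^ (k + 1) * ↑(k + 1) * (n + 1).choose (k + 1) : ℤ) =
          -(n + 1) * ((-1) ^ k * n.choose k) := by
      intro k _
      have h : ((n + 1) * n.choose k : ℤ) = (n + 1).choose (k + 1) * (k + 1) := by
        exact_mod_cast Nat.add_one_mul_choose_eq n k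
      push_cast
      linear_combination (-1 : ℤ) ^ k * h
    rw [sum_range_succ', sum_congr rfl absorb, ← mul_sum, Int.alternating_sum_range_choose]
    by_cases hn : n = 0 <;> simp [hn]

theorem Int.alternating_sum_range_sub_mul_choose (n : ℕ) (b : ℤ) :
    ∑ k ∈ Finset.range (n + 1), (-1) ^ k * (b - k) * n.choose k =
      (if n = 0 then b else 0) + if n = 1 then 1 else 0 := by
  have split : ∀ k ∈ Finset.range (n + 1), (-1) ^ k * (b - k) * n.choose k =
      b * ((-1) ^ k * n.choose k) - (-1) ^ k * k * n.choose k := by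
    intro k _
    ring
  rw [sum_congr rfl split, sum_sub_distrib, ← mul_sum, Int.alternating_sum_range_choose,
    Int.alternating_sum_range_mul_choose]
  split_ifs <;> simp_all

theorem C_natCast_sub_natCast (a t c : ℕ) :
    C a ((t : ℤ) - c) = if c ≤ t then (a.choose (t - c) : ℤ) else 0 := by
  unfold C
  split_ifs with h hct hct
  · rw [show ((t : ℤ) - c).toNat = t - c by omega]
    simp
  · omega
  · rw [Nat.choose_eq_zero_of_lt (by omega)]
    simp
  · rfl

theorem sum_range_mul_C_natCast_sub (g : ℕ → ℤ) {a c N : ℕ} (hN : c + a < N) :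
    ∑ t ∈ range N, g t * C a ((t : ℤ) - c) = ∑ k ∈ range (a + 1), g (c + k) * a.choose k := by
  obtain ⟨n, rfl⟩ : ∃ n, N = c + n := ⟨N - c, by omega⟩
  rw [sum_range_add, sum_eq_zero fun t ht => ?below, zero_add]
  case below =>
    rw [C_natCast_sub_natCast, if_neg (by simp at ht; omega), mul_zero]
  simp only [C_natCast_sub_natCast, Nat.le_add_right, if_true, Nat.add_sub_cancel_left]
  refine (sum_subset (range_subset_range.2 (by omega)) fun k _ hk => ?_).symm
  rw [Nat.choose_eq_zero_of_lt (by simpa using hk), Nat.cast_zero, mul_zero]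

theorem f_eq {m r s₁ s₂ : ℕ} (h₁ : s₁ ≤ r) (h₂ : s₂ ≤ m) :
    f m r s₁ s₂ = (-1) ^ (s₁ + s₂) *
      ((if r = s₁ then (m + r - s₁ - s₂ : ℤ) else 0) + if r = s₁ + 1 then 1 else 0) := by
  -- the vanishing term `t = m + r` is appended so that the support `[s₁ + s₂, s₂ + r]` fits
  have extend : f m r s₁ s₂ = ∑ t ∈ range (m + r + 1),
      (-1) ^ t * ((m : ℤ) + r - t) * C ↑(r - s₁) ((t : ℤ) - ↑(s₁ + s₂)) := by
    rw [sum_range_succ, f]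
    push_cast [h₁]
    simp only [sub_self, mul_zero, zero_mul, add_zero, sub_sub]
  rw [extend, sum_range_mul_C_natCast_sub _ (by omega)]
  have shift : ∀ k ∈ range (r - s₁ + 1),
      (-1) ^ (s₁ + s₂ + k) * ((m : ℤ) + r - ↑(s₁ + s₂ + k)) * (r - s₁).choose k =
        (-1) ^ (s₁ + s₂) * ((-1) ^ k * (((m : ℤ) + r - s₁ - s₂) - k) * (r - s₁).choose k) := by
    intro k _
    push_cast
    ring
  rw [sum_congr rfl shift, ← mul_sum, Int.alternating_sum_range_sub_mul_choose]
  congr 2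
  · exact if_congr (by omega) rfl rfl
  · exact if_congr (by omega) rfl rfl

theorem stmt4 (m s₁ s₂ : ℕ) (h : s₁ + s₂ ≤ m) :
    (((s₁, s₂) ≠ (m, 0) ∧ (s₁, s₂) ≠ (m - 1, 1) ∧ (s₁, s₂) ≠ (m - 1, 0)) → f m m s₁ s₂ = 0) ∧
    (1 ≤ m →
      f m m m 0 = (-1 : ℤ) ^ m * m ∧
      f m m (m - 1) 1 = (-1 : ℤ) ^ m ∧
      f m m (m - 1) 0 = (-1 : ℤ) ^ (m + 1)) := by
  refine ⟨fun ⟨hne₁, hne₂, hne₃⟩ => ?_, fun hm => ⟨?_, ?_, ?_⟩⟩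
  · rw [f_eq (by omega) (by omega), if_neg, if_neg, add_zero, mul_zero]
    · rintro rfl
      obtain rfl | rfl : s₂ = 0 ∨ s₂ = 1 := by omega
      exacts [hne₃ (by simp), hne₂ (by simp)]
    · rintro rfl
      exact hne₁ (by simp [show s₂ = 0 by omega])
  · rw [f_eq le_rfl (Nat.zero_le m), if_pos rfl, if_neg (by omega)]
    push_cast
    ring
  · rw [f_eq (by omega) hm, if_neg (by omega), if_pos (by omega), Nat.sub_add_cancel hm]
    ring
  · rw [f_eq (by omega) (Nat.zero_le m), if_neg (by omega), if_pos (by omega),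
      show m + 1 = m - 1 + 2 by omega, pow_add]
    ring
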